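/- The set N of all types is finite; that is, the set of all tuples [m_1, ..., m_r] (of any length r ≥ 3) with 2 ≤ m_1 ≤ ... ≤ m_r, Θ(T) > 0, α(T) := 4/Θ(T) a positive integer, and m_i dividing α(T) for all i, is a finite set. -/

import Mathlib

/-!
The key fact is Hurwitz's gap: a positive `Θ` of a list of integers `≥ 2` is at least `1/42`,
attained at `[2, 3, 7]`. Hence `α = 4/Θ ≤ 168`, which bounds every entry of a type since it
divides `α`; and `r/2 - 2 ≤ Θ = 4/α ≤ 4` bounds the length by `12`.
-/

/-- For a tuple `T = [m₁, ..., m_r]`, `Θ(T) := -2 + ∑ᵢ (1 - 1/mᵢ)` as a rational number. -/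
def Theta (T : List ℕ) : ℚ :=
  -2 + (T.map (fun m => 1 - (1 : ℚ) / m)).sum

/-- `T` is a type: `T = [m₁, ..., m_r]` with `r ≥ 3`, `2 ≤ m₁ ≤ ... ≤ m_r`, `Θ(T) > 0`,
`α(T) = 4/Θ(T)` a positive integer, and `mᵢ ∣ α(T)` for all `i`. -/
def IsType (T : List ℕ) : Prop :=
  3 ≤ T.length ∧ T.Pairwise (· ≤ ·) ∧ (∀ m ∈ T, 2 ≤ m) ∧ 0 < Theta T ∧
    ∃ a : ℕ, 0 < a ∧ (a : ℚ) * Theta T = 4 ∧ ∀ m ∈ T, m ∣ a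

lemma List.finite_setOf_length_le_forall_mem {α : Type*} {s : Set α} (hs : s.Finite) (n : ℕ) :
    {l : List α | l.length ≤ n ∧ ∀ x ∈ l, x ∈ s}.Finite := by
  have := hs.to_subtype
  refine ((List.finite_length_le s n).image (List.map Subtype.val)).subset ?_
  rintro l ⟨hlen, hmem⟩
  lift l to List s using hmem
  exact ⟨l, by simpa using hlen, rfl⟩

lemma one_div_natCast_le_one_div {m k : ℕ} (hm : 0 < m) (h : m ≤ k) : (1 : ℚ) / k ≤ 1 / m :=
  one_div_le_one_div_of_le (by exact_mod_cast hm) (by exact_mod_cast h)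

/-- The thresholds of the case split come from the extremal triples `(2, 3, 7)`, `(2, 4, 5)`
and `(3, 3, 4)`. -/
lemma one_div_add_one_div_add_one_div_le_of_lt_one {p q s : ℕ} (hp : 2 ≤ p) (hpq : p ≤ q)
    (hqs : q ≤ s) (h : (1 : ℚ) / p + 1 / q + 1 / s < 1) :
    (1 : ℚ) / p + 1 / q + 1 / s ≤ 41 / 42 := by
  have hq := one_div_natCast_le_one_div (by omega) hpq
  have hs := one_div_natCast_le_one_div (by omega) hqs
  rcases lt_or_ge p 4 with hp4 | hp4
  · interval_cases p
    · rcases lt_or_ge q 5 with hq5 | hq5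
      · interval_cases q
        · have : (0 : ℚ) < 1 / s := one_div_pos.mpr (by exact_mod_cast (show 0 < s by omega))
          linarith
        · rcases lt_or_ge s 7 with hs7 | hs7
          · interval_cases s <;> norm_num at h
          · linarith [one_div_natCast_le_one_div (by norm_num) hs7]
        · rcases lt_or_ge s 5 with hs5 | hs5
          · obtain rfl : s = 4 := by omega
            norm_num at h
          · linarith [one_div_natCast_le_one_div (by norm_num) hs5]
      · linarith [one_div_natCast_le_one_div (by norm_num) hq5]
    · rcases lt_or_ge q 4 with hq4 | hq4
      · obtain rfl : q = 3 := by omega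
        rcases lt_or_ge s 4 with hs4 | hs4
        · obtain rfl : s = 3 := by omega
          norm_num at h
        · linarith [one_div_natCast_le_one_div (by norm_num) hs4]
      · linarith [one_div_natCast_le_one_div (by norm_num) hq4]
  · linarith [one_div_natCast_le_one_div (by norm_num) hp4]

lemma Theta_nil : Theta [] = -2 := by
  simp [Theta]

lemma Theta_cons (m : ℕ) (T : List ℕ) : Theta (m :: T) = (1 - 1 / (m : ℚ)) + Theta T := by
  simp only [Theta, one_div, List.pure_def, List.bind_eq_flatMap, List.flatMap_cons,
    List.cons_append, List.nil_append, List.map_cons, List.sum_cons]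
  ring

lemma half_length_sub_two_le_Theta {T : List ℕ} (h2 : ∀ m ∈ T, 2 ≤ m) :
    (T.length : ℚ) / 2 - 2 ≤ Theta T := by
  induction T with
  | nil => simp [Theta_nil]
  | cons m T ih =>
    have hm := one_div_natCast_le_one_div (by norm_num) (h2 m List.mem_cons_self)
    have hT := ih fun x hx => h2 x (List.mem_cons_of_mem m hx)
    rw [Theta_cons, List.length_cons]
    push_cast
    linarith

lemma one_div_42_le_Theta {T : List ℕ} (h3 : 3 ≤ T.length) (hs : T.Pairwise (· ≤ ·))
    (h2 : ∀ m ∈ T, 2 ≤ m) (hpos : 0 < Theta T) : 1 / 42 ≤ Theta T := by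
  match T, h3 with
  | [p, q, s], _ =>
    simp only [List.pairwise_cons, List.forall_mem_cons, List.not_mem_nil, IsEmpty.forall_iff,
      implies_true, List.Pairwise.nil, and_true] at hs h2
    obtain ⟨hp, -, -⟩ := h2
    obtain ⟨⟨hpq, -⟩, hqs⟩ := hs
    have hΘ : Theta [p, q, s] = 1 - (1 / (p : ℚ) + 1 / q + 1 / s) := by
      rw [Theta_cons, Theta_cons, Theta_cons, Theta_nil]
      ring
    rw [hΘ] at hpos ⊢
    linarith [one_div_add_one_div_add_one_div_le_of_lt_one hp hpq hqs (by linarith)]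
  | [p, q, s, w], _ =>
    simp only [List.pairwise_cons, List.forall_mem_cons, List.not_mem_nil, IsEmpty.forall_iff,
      implies_true, List.Pairwise.nil, and_true] at hs h2
    obtain ⟨hp, hq, hs', hw⟩ := h2
    obtain ⟨⟨-, -, hpw⟩, ⟨-, hqw⟩, hsw⟩ := hs
    have hΘ : Theta [p, q, s, w] = 2 - (1 / (p : ℚ) + 1 / q + 1 / s + 1 / w) := by
      rw [Theta_cons, Theta_cons, Theta_cons, Theta_cons, Theta_nil]
      ring
    rw [hΘ] at hpos ⊢
    rcases lt_or_ge w 3 with hw3 | hw3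
    · obtain ⟨rfl, rfl, rfl, rfl⟩ : p = 2 ∧ q = 2 ∧ s = 2 ∧ w = 2 := by omega
      norm_num at hpos
    · linarith [one_div_natCast_le_one_div (by norm_num) hp,
        one_div_natCast_le_one_div (by norm_num) hq, one_div_natCast_le_one_div (by norm_num) hs',
        one_div_natCast_le_one_div (by norm_num) hw3]
  | p :: q :: s :: w :: x :: T, _ =>
    have := half_length_sub_two_le_Theta h2
    push_cast [List.length_cons] at this
    linarith [(T.length.cast_nonneg : (0 : ℚ) ≤ T.length)]

theorem IsType.le_168_of_mem {T : List ℕ} (hT : IsType T) {m : ℕ} (hm : m ∈ T) :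
    m ≤ 168 := by
  obtain ⟨h3, hs, h2, hpos, a, ha, haΘ, hdvd⟩ := hT
  have hgap := one_div_42_le_Theta h3 hs h2 hpos
  have : (a : ℚ) ≤ 168 := by nlinarith
  calc m ≤ a := Nat.le_of_dvd ha (hdvd m hm)
    _ ≤ 168 := by exact_mod_cast this

theorem IsType.length_le_12 {T : List ℕ} (hT : IsType T) : T.length ≤ 12 := by
  obtain ⟨-, -, h2, hpos, a, ha, haΘ, -⟩ := hT
  have ha1 : (1 : ℚ) ≤ a := by exact_mod_cast ha
  have hΘ : Theta T ≤ 4 := by nlinarith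
  have := half_length_sub_two_le_Theta h2
  have : (T.length : ℚ) ≤ 12 := by linarith
  exact_mod_cast this

/-- The set `𝒩` of all types is finite. -/
theorem setOf_isType_finite : {T : List ℕ | IsType T}.Finite :=
  (List.finite_setOf_length_le_forall_mem (Set.finite_Iic 168) 12).subset fun _ hT =>
    ⟨hT.length_le_12, fun _ hm => hT.le_168_of_mem hm⟩
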